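/- Let l > 0 and let u be the vortex map on B_l. For each k ∈ ℕ with 1/k < l, let φ_k : [0, l] → [0, 1] be a smooth function with φ_k ≡ 0 on [0, 1/k²], φ_k ≡ 1 on [1/k, l], and 0 ≤ φ_k′ ≤ 2k, and define u_k : B_l → ℝ² by u_k(x) := φ_k(|x|) · x/|x| for x ≠ 0 and u_k(0) := 0 (so u_k ∈ C¹(B_l, ℝ²)). Then lim_{k→∞} ∫_{B_l} √(1 + |∇u_k(x)|² + (det ∇u_k(x))²) dx = ∫_{B_l} √(1 + |∇u(x)|²) dx + π. -/

import Mathlib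

open MeasureTheory Filter Metric Topology
open scoped ENNReal NNReal

noncomputable section

abbrev V2 : Type := EuclideanSpace ℝ (Fin 2)

/-- Squared Frobenius norm of (the matrix of) a continuous linear map on `ℝ²`. -/
def frobSq (L : V2 →L[ℝ] V2) : ℝ :=
  ∑ i : Fin 2, ∑ j : Fin 2, (L (EuclideanSpace.single j 1) i) ^ 2

/-- Determinant of (the matrix of) a continuous linear map on `ℝ²`. -/
def detJ (L : V2 →L[ℝ] V2) : ℝ :=
  L (EuclideanSpace.single 0 1) 0 * L (EuclideanSpace.single 1 1) 1 -
    L (EuclideanSpace.single 1 1) 0 * L (EuclideanSpace.single 0 1) 1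

/-- The vortex map `x ↦ x / |x|` (equal to `0` at the origin). -/
def vortex (x : V2) : V2 := ‖x‖⁻¹ • x

/-- The area integrand `√(1 + |∇v|² + (det ∇v)²)`. -/
def areaIntegrand (v : V2 → V2) (x : V2) : ℝ :=
  Real.sqrt (1 + frobSq (fderiv ℝ v x) + detJ (fderiv ℝ v x) ^ 2)

/-- Area of the graph of `v` over the set `E`. -/
def graphArea (v : V2 → V2) (E : Set V2) : ℝ≥0∞ :=
  ∫⁻ x in E, ENNReal.ofReal (areaIntegrand v x)

/-- `∫_{B_l} √(1 + |∇u|²) dx` for the vortex map `u`. -/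
def vortexGradArea (l : ℝ) : ℝ≥0∞ :=
  ∫⁻ x in ball (0 : V2) l, ENNReal.ofReal (Real.sqrt (1 + frobSq (fderiv ℝ vortex x)))

/-- The `L¹`-relaxed area of the graph of the vortex map over `B_l`:
the infimum of `liminf_k 𝒜(v_k, B_l)` over all sequences `(v_k)` of maps that are
`C¹` on `B_l` and converge to the vortex map in `L¹(B_l, ℝ²)`. -/
def relaxedArea (l : ℝ) : ℝ≥0∞ :=
  sInf { a : ℝ≥0∞ | ∃ v : ℕ → V2 → V2,
    (∀ k, ContDiffOn ℝ 1 (v k) (ball (0 : V2) l)) ∧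
    Tendsto (fun k => ∫⁻ x in ball (0 : V2) l, ENNReal.ofReal ‖v k x - vortex x‖)
      atTop (𝓝 0) ∧
    a = Filter.liminf (fun k => graphArea (v k) (ball (0 : V2) l)) atTop }

/-! ### Auxiliary lemmas -/

section Aux

open Set

lemma hasFDerivAt_norm' (x : V2) (hx : x ≠ 0) :
    HasFDerivAt (fun y : V2 => ‖y‖) (‖x‖⁻¹ • innerSL ℝ x) x := by
  have hr : (0:ℝ) < ‖x‖ := norm_pos_iff.2 hx
  have h2 : HasFDerivAt (fun y : V2 => ‖y‖ ^ 2) (2 • innerSL ℝ x) x :=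
    (hasStrictFDerivAt_norm_sq x).hasFDerivAt
  have hs : HasDerivAt Real.sqrt (1 / (2 * Real.sqrt (‖x‖ ^ 2))) (‖x‖ ^ 2) :=
    Real.hasDerivAt_sqrt (by positivity)
  have h3 := hs.comp_hasFDerivAt x h2
  have hfun : (Real.sqrt ∘ fun y : V2 => ‖y‖ ^ 2) = fun y : V2 => ‖y‖ := by
    funext y; simp [Function.comp, Real.sqrt_sq (norm_nonneg y)]
  rw [hfun] at h3
  refine h3.congr_fderiv ?_
  rw [Real.sqrt_sq hr.le]
  ext y
  simp [smul_smul]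
  ring

lemma keyFDeriv (f : ℝ → ℝ) (f' : ℝ) (x : V2) (hx : x ≠ 0) (hf : HasDerivAt f f' ‖x‖) :
    frobSq (fderiv ℝ (fun y : V2 => (f ‖y‖ * ‖y‖⁻¹) • y) x)
        = f' ^ 2 + (f ‖x‖ * ‖x‖⁻¹) ^ 2 ∧
      detJ (fderiv ℝ (fun y : V2 => (f ‖y‖ * ‖y‖⁻¹) • y) x)
        = f' * (f ‖x‖ * ‖x‖⁻¹) := by
  have hr : (0:ℝ) < ‖x‖ := norm_pos_iff.2 hx
  set r : ℝ := ‖x‖ with hrdef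
  have hrne : r ≠ 0 := hr.ne'
  have hq : HasDerivAt (fun t : ℝ => f t * t⁻¹) (f' * r⁻¹ + f r * -(r ^ 2)⁻¹) r :=
    hf.mul (hasDerivAt_inv hrne)
  set m : ℝ := f' * r⁻¹ + f r * -(r ^ 2)⁻¹ with hmdef
  have hscal : HasFDerivAt (fun y : V2 => f ‖y‖ * ‖y‖⁻¹) (m • (r⁻¹ • innerSL ℝ x)) x := by
    have := hq.comp_hasFDerivAt x (hasFDerivAt_norm' x hx)
    exact this
  have hmain : HasFDerivAt (fun y : V2 => (f ‖y‖ * ‖y‖⁻¹) • y)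
      ((f r * r⁻¹) • ContinuousLinearMap.id ℝ V2
        + (m • (r⁻¹ • innerSL ℝ x)).smulRight x) x := by
    exact hscal.smul (hasFDerivAt_id x)
  rw [hmain.fderiv]
  set a : ℝ := f r * r⁻¹ with hadef
  set c : ℝ := m * r⁻¹ with hcdef
  have hentry : ∀ i j : Fin 2,
      ((a • ContinuousLinearMap.id ℝ V2 + (m • (r⁻¹ • innerSL ℝ x)).smulRight x)
        (EuclideanSpace.single j 1)) i
      = a * (if i = j then 1 else 0) + c * x j * x i := by
    intro i j
    have hinner : (innerSL ℝ x) (EuclideanSpace.single j (1:ℝ)) = x j := by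
      simp [EuclideanSpace.inner_single_right]
    simp only [ContinuousLinearMap.add_apply, ContinuousLinearMap.smul_apply,
      ContinuousLinearMap.id_apply, ContinuousLinearMap.smulRight_apply, hinner]
    by_cases h : i = j
    · simp [h, EuclideanSpace.single_apply, smul_eq_mul, hcdef]
      left; ring
    · simp [h, EuclideanSpace.single_apply, smul_eq_mul, hcdef]
      left; ring
  have e1 : x 0 ^ 2 + x 1 ^ 2 = r ^ 2 := by
    have := EuclideanSpace.norm_eq x
    rw [hrdef, this]
    rw [Real.sq_sqrt (by positivity)]
    simp [Fin.sum_univ_two, sq_abs]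
  have e2 : c * r ^ 2 = f' - a := by
    rw [hcdef, hmdef, hadef]
    field_simp
    ring
  constructor
  · rw [frobSq]
    simp only [Fin.sum_univ_two, hentry]
    norm_num
    linear_combination (2*a*c + c^2*(x 0^2 + x 1^2 + r^2)) * e1 + (2*a + c*r^2 + f' - a) * e2
  · rw [detJ]
    simp only [hentry]
    norm_num
    linear_combination a*c*e1 + a*e2

lemma toSphere_univ_V2 :
    (volume : Measure V2).toSphere Set.univ = ENNReal.ofReal (2 * Real.pi) := by
  rw [Measure.toSphere_apply_univ]
  have h1 : Module.finrank ℝ V2 = 2 := finrank_euclideanSpace_fin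
  have h2 : volume (ball (0 : V2) 1) = ENNReal.ofReal Real.pi := by
    rw [EuclideanSpace.volume_ball]
    simp only [Fintype.card_fin]
    norm_num
    rw [← ENNReal.ofReal_pow (Real.sqrt_nonneg _), Real.sq_sqrt Real.pi_pos.le]
  rw [h1, h2]
  rw [ENNReal.ofReal_mul (by norm_num)]
  norm_num

lemma radial_lintegral (f : ℝ → ℝ≥0∞) (hf : Measurable f) :
    ∫⁻ x, f ‖x‖ ∂(volume : Measure V2)
      = ENNReal.ofReal (2 * Real.pi) * ∫⁻ r in Ioi (0:ℝ), ENNReal.ofReal r * f r := by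
  have hdim : Module.finrank ℝ V2 = 2 := finrank_euclideanSpace_fin
  have h0 : ∫⁻ x, f ‖x‖ ∂(volume : Measure V2)
      = ∫⁻ y : ({0}ᶜ : Set V2), f ‖(y : V2)‖ ∂((volume : Measure V2).comap Subtype.val) := by
    rw [lintegral_subtype_comap (measurableSet_singleton (0:V2)).compl
      (fun x : V2 => f ‖x‖)]
    rw [MeasureTheory.restrict_compl_singleton]
  have hmp := (volume : Measure V2).measurePreserving_homeomorphUnitSphereProd
  rw [hdim] at hmp
  norm_num at hmp
  have h1 : ∫⁻ y : ({0}ᶜ : Set V2), f ‖(y : V2)‖ ∂((volume : Measure V2).comap Subtype.val)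
      = ∫⁻ p : sphere (0:V2) 1 × Ioi (0:ℝ), f p.2
          ∂((volume : Measure V2).toSphere.prod (Measure.volumeIoiPow 1)) := by
    rw [← hmp.lintegral_comp_emb (Homeomorph.measurableEmbedding _) (fun p => f p.2.1)]
    apply lintegral_congr
    intro y
    simp [homeomorphUnitSphereProd, homeomorphSphereProd]
  have hm2 : Measurable (fun p : sphere (0:V2) 1 × Ioi (0:ℝ) => f (p.2 : ℝ)) :=
    (hf.comp measurable_subtype_coe).comp measurable_snd
  have h2 : ∫⁻ p : sphere (0:V2) 1 × Ioi (0:ℝ), f p.2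
        ∂((volume : Measure V2).toSphere.prod (Measure.volumeIoiPow 1))
      = (volume : Measure V2).toSphere Set.univ
          * ∫⁻ r : Ioi (0:ℝ), f r ∂(Measure.volumeIoiPow 1) := by
    rw [lintegral_prod _ hm2.aemeasurable]
    simp [lintegral_const, mul_comm]
  have hdens : Measurable (fun r : Ioi (0:ℝ) => ENNReal.ofReal ((r : ℝ) ^ 1)) :=
    (measurable_subtype_coe.pow_const 1).ennreal_ofReal
  have hg : Measurable (fun r : Ioi (0:ℝ) => f (r : ℝ)) :=
    hf.comp measurable_subtype_coe
  have h3 : ∫⁻ r : Ioi (0:ℝ), f r ∂(Measure.volumeIoiPow 1)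
      = ∫⁻ r in Ioi (0:ℝ), ENNReal.ofReal r * f r := by
    rw [Measure.volumeIoiPow]
    rw [lintegral_withDensity_eq_lintegral_mul _ hdens hg]
    rw [← lintegral_subtype_comap measurableSet_Ioi (fun r : ℝ => ENNReal.ofReal r * f r)]
    apply lintegral_congr
    intro a
    simp [pow_one]
  rw [h0, h1, h2, h3, toSphere_univ_V2]

lemma radial_lintegral_set (f : ℝ → ℝ≥0∞) (hf : Measurable f) {s : Set ℝ}
    (hs : MeasurableSet s) (h0 : s ⊆ Ioi (0:ℝ)) :
    ∫⁻ x in {x : V2 | ‖x‖ ∈ s}, f ‖x‖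
      = ENNReal.ofReal (2 * Real.pi) * ∫⁻ r in s, ENNReal.ofReal r * f r := by
  have key := radial_lintegral (s.indicator f) (hf.indicator hs)
  have hL : ∫⁻ x, (s.indicator f) ‖x‖ ∂(volume : Measure V2)
      = ∫⁻ x in {x : V2 | ‖x‖ ∈ s}, f ‖x‖ := by
    have : (fun x : V2 => (s.indicator f) ‖x‖)
        = Set.indicator {x : V2 | ‖x‖ ∈ s} (fun x => f ‖x‖) := by
      funext x
      by_cases h : ‖x‖ ∈ s <;> simp [Set.indicator, h]
    rw [this, lintegral_indicator]
    exact measurable_norm hs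
  have hR : ∫⁻ r in Ioi (0:ℝ), ENNReal.ofReal r * (s.indicator f) r
      = ∫⁻ r in s, ENNReal.ofReal r * f r := by
    have : (fun r : ℝ => ENNReal.ofReal r * (s.indicator f) r)
        = Set.indicator s (fun r => ENNReal.ofReal r * f r) := by
      funext r
      by_cases h : r ∈ s <;> simp [Set.indicator, h]
    rw [this, lintegral_indicator hs, Measure.restrict_restrict hs,
      Set.inter_eq_left.mpr h0]
  rw [hL, hR] at key
  exact key

/-- Radial representation of a lintegral over the disc. -/
lemma ball_to_radial (l : ℝ) (w : V2 → ℝ≥0∞) (H : ℝ → ℝ≥0∞) (hH : Measurable H)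
    (hw : ∀ x : V2, ‖x‖ ∈ Set.Ioo 0 l → w x = H ‖x‖) :
    ∫⁻ x in ball (0:V2) l, w x
      = ENNReal.ofReal (2 * Real.pi) * ∫⁻ r in Set.Ioo 0 l, ENNReal.ofReal r * H r := by
  have hset : {x : V2 | ‖x‖ ∈ Set.Ioo 0 l} = ball (0:V2) l \ {0} := by
    ext x
    simp only [Set.mem_setOf_eq, Set.mem_Ioo, Set.mem_diff, mem_ball_zero_iff,
      Set.mem_singleton_iff, norm_pos_iff]
    tauto
  have hae : (ball (0:V2) l : Set V2) =ᵐ[volume] {x : V2 | ‖x‖ ∈ Set.Ioo 0 l} := by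
    rw [hset]
    exact (MeasureTheory.diff_ae_eq_self.mpr
      (measure_mono_null Set.inter_subset_right (measure_singleton 0))).symm
  rw [setLIntegral_congr hae]
  have hms : MeasurableSet {x : V2 | ‖x‖ ∈ Set.Ioo 0 l} := measurable_norm measurableSet_Ioo
  rw [setLIntegral_congr_fun hms (fun x hx => hw x hx)]
  exact radial_lintegral_set H hH measurableSet_Ioo (fun r hr => hr.1)

/-- scaled radial profile of the smoothed maps -/
def Phi (φ : ℕ → ℝ → ℝ) (l : ℝ) (k : ℕ) (r : ℝ) : ℝ := φ k (max 0 (min r l))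

/-- area integrand, radial form, for the smoothed maps -/
def Gk (φ : ℕ → ℝ → ℝ) (l : ℝ) (k : ℕ) (r : ℝ) : ℝ≥0∞ :=
  ENNReal.ofReal (Real.sqrt (1 + ((deriv (φ k) r) ^ 2 + (Phi φ l k r * r⁻¹) ^ 2)
    + (deriv (φ k) r * (Phi φ l k r * r⁻¹)) ^ 2))

/-- gradient-area integrand, radial form, for the vortex map -/
def Gvort (r : ℝ) : ℝ≥0∞ := ENNReal.ofReal (Real.sqrt (1 + (r⁻¹) ^ 2))

lemma Gvort_meas : Measurable Gvort := by
  apply Measurable.ennreal_ofReal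
  exact Real.continuous_sqrt.measurable.comp ((measurable_inv.pow_const 2).const_add 1)

lemma ofReal_mul_Gvort (r : ℝ) (hr : 0 < r) :
    ENNReal.ofReal r * Gvort r = ENNReal.ofReal (Real.sqrt (r ^ 2 + 1)) := by
  rw [Gvort, ← ENNReal.ofReal_mul hr.le]
  congr 1
  conv_lhs => rw [← Real.sqrt_sq hr.le]
  rw [← Real.sqrt_mul (sq_nonneg r)]
  congr 1
  rw [Real.sqrt_sq hr.le]
  field_simp

lemma point_id (r d p : ℝ) (hr : 0 < r) :
    r * Real.sqrt (1 + (d ^ 2 + (p * r⁻¹) ^ 2) + (d * (p * r⁻¹)) ^ 2)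
      = Real.sqrt (1 + d ^ 2) * Real.sqrt (r ^ 2 + p ^ 2) := by
  rw [← Real.sqrt_mul (by positivity : (0:ℝ) ≤ 1 + d ^ 2)]
  conv_lhs => rw [← Real.sqrt_sq hr.le]
  rw [← Real.sqrt_mul (sq_nonneg r)]
  congr 1
  rw [Real.sqrt_sq hr.le]
  field_simp
  ring

lemma point_bounds (r d p K : ℝ) (hr : 0 < r) (hd0 : 0 ≤ d) (hdK : d ≤ 2 * K)
    (hp0 : 0 ≤ p) (hpr : p ≤ 2 * K * r) :
    d * p ≤ Real.sqrt (1 + d ^ 2) * Real.sqrt (r ^ 2 + p ^ 2) ∧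
    Real.sqrt (1 + d ^ 2) * Real.sqrt (r ^ 2 + p ^ 2) ≤ d * p + (4 * K + 1) * r := by
  have h1 : d ≤ Real.sqrt (1 + d ^ 2) := by
    have := Real.sqrt_le_sqrt (show d ^ 2 ≤ 1 + d ^ 2 by nlinarith)
    rwa [Real.sqrt_sq hd0] at this
  have h2 : p ≤ Real.sqrt (r ^ 2 + p ^ 2) := by
    have := Real.sqrt_le_sqrt (show p ^ 2 ≤ r ^ 2 + p ^ 2 by nlinarith)
    rwa [Real.sqrt_sq hp0] at this
  have h3 : Real.sqrt (1 + d ^ 2) ≤ 1 + d := by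
    rw [← Real.sqrt_sq (by positivity : (0:ℝ) ≤ 1 + d)]
    exact Real.sqrt_le_sqrt (by nlinarith)
  have h4 : Real.sqrt (r ^ 2 + p ^ 2) ≤ r + p := by
    rw [← Real.sqrt_sq (by positivity : (0:ℝ) ≤ r + p)]
    apply Real.sqrt_le_sqrt
    nlinarith [mul_nonneg hr.le hp0]
  constructor
  · exact mul_le_mul h1 h2 hp0 (Real.sqrt_nonneg _)
  · calc Real.sqrt (1 + d ^ 2) * Real.sqrt (r ^ 2 + p ^ 2)
        ≤ (1 + d) * (r + p) :=
          mul_le_mul h3 h4 (Real.sqrt_nonneg _) (by positivity)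
      _ ≤ d * p + (4 * K + 1) * r := by
          nlinarith [mul_le_mul_of_nonneg_right hdK hr.le]

end Aux

/-- The sequence `u_k(x) = φ_k(|x|) x/|x|`, where `φ_k` vanishes near the origin and
equals `1` on `[1/k, l]`, has graph areas converging to
`∫_{B_l} √(1 + |∇u|²) dx + π`. -/
theorem graphArea_smoothing_two_discs (l : ℝ) (hl : 0 < l) (φ : ℕ → ℝ → ℝ)
    (hφ : ∀ k : ℕ, 3 ≤ k → 1 / (k : ℝ) < l →
      ContDiffOn ℝ (⊤ : ℕ∞) (φ k) (Set.Icc 0 l) ∧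
      (∀ r ∈ Set.Icc (0 : ℝ) l, φ k r ∈ Set.Icc (0 : ℝ) 1) ∧
      (∀ r ∈ Set.Icc (0 : ℝ) (1 / (k : ℝ) ^ 2), φ k r = 0) ∧
      (∀ r ∈ Set.Icc (1 / (k : ℝ)) l, φ k r = 1) ∧
      (∀ r ∈ Set.Icc (0 : ℝ) l, 0 ≤ derivWithin (φ k) (Set.Icc 0 l) r ∧
        derivWithin (φ k) (Set.Icc 0 l) r ≤ 2 * (k : ℝ))) :
    Tendsto (fun k => graphArea (fun x => φ k ‖x‖ • vortex x) (ball (0 : V2) l))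
      atTop (𝓝 (vortexGradArea l + ENNReal.ofReal Real.pi)) := by
  classical
  set C : ℝ≥0∞ := ENNReal.ofReal (2 * Real.pi) with hCdef
  have hCne : C ≠ ⊤ := ENNReal.ofReal_ne_top
  -- the vortex gradient area in radial form
  have hvort : vortexGradArea l = C * ∫⁻ r in Set.Ioo 0 l, ENNReal.ofReal r * Gvort r := by
    rw [vortexGradArea]
    apply ball_to_radial l _ Gvort Gvort_meas
    intro x hx
    have hx0 : x ≠ 0 := norm_pos_iff.1 hx.1
    have hveq : vortex = fun y : V2 => ((fun _ : ℝ => (1:ℝ)) ‖y‖ * ‖y‖⁻¹) • y := by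
      funext y; simp [vortex]
    rw [hveq, (keyFDeriv (fun _ => (1:ℝ)) 0 x hx0 (hasDerivAt_const _ _)).1, Gvort]
    norm_num
  -- a finiteness/smallness bound
  have hbound : ∀ s : Set ℝ, MeasurableSet s → s ⊆ Set.Ioo 0 l →
      ∫⁻ r in s, ENNReal.ofReal r * Gvort r
        ≤ ENNReal.ofReal (Real.sqrt (l ^ 2 + 1)) * volume s := by
    intro s hs hsub
    calc ∫⁻ r in s, ENNReal.ofReal r * Gvort r
        ≤ ∫⁻ _ in s, ENNReal.ofReal (Real.sqrt (l ^ 2 + 1)) := by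
          apply lintegral_mono_ae
          filter_upwards [ae_restrict_mem hs] with r hr
          rw [ofReal_mul_Gvort r (hsub hr).1]
          apply ENNReal.ofReal_le_ofReal
          apply Real.sqrt_le_sqrt
          have h1 := (hsub hr).1
          have h2 := (hsub hr).2
          nlinarith
      _ = ENNReal.ofReal (Real.sqrt (l ^ 2 + 1)) * volume s := setLIntegral_const _ _
  have hT : vortexGradArea l ≠ ⊤ := by
    rw [hvort]
    apply ENNReal.mul_ne_top hCne
    apply ne_top_of_le_ne_top _ (hbound _ measurableSet_Ioo subset_rfl)
    exact ENNReal.mul_ne_top ENNReal.ofReal_ne_top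
      (by rw [Real.volume_Ioo]; exact ENNReal.ofReal_ne_top)
  set A : ℕ → ℝ≥0∞ := fun k =>
    C * ∫⁻ r in Set.Ioc 0 (1/(k:ℝ)), ENNReal.ofReal r * Gk φ l k r with hAdef
  set B : ℕ → ℝ≥0∞ := fun k =>
    C * ∫⁻ r in Set.Ioo (1/(k:ℝ)) l, ENNReal.ofReal r * Gvort r with hBdef
  set S : ℕ → ℝ≥0∞ := fun k =>
    C * ∫⁻ r in Set.Ioc 0 (1/(k:ℝ)), ENNReal.ofReal r * Gvort r with hSdef
  set U : ℕ → ℝ≥0∞ := fun k => ENNReal.ofReal Real.pi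
    + ENNReal.ofReal (2 * Real.pi * ((4*(k:ℝ)+1) * (1/(k:ℝ))) * (1/(k:ℝ))) with hUdef
  -- the big eventual block
  have hev : ∀ᶠ k : ℕ in atTop,
      (graphArea (fun x => φ k ‖x‖ • vortex x) (ball (0:V2) l) = A k + B k)
      ∧ ENNReal.ofReal Real.pi ≤ A k ∧ A k ≤ U k
      ∧ S k + B k = vortexGradArea l
      ∧ S k ≤ C * (ENNReal.ofReal (Real.sqrt (l ^ 2 + 1)) * ENNReal.ofReal (1/(k:ℝ))) := by
    filter_upwards [eventually_ge_atTop 3,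
      tendsto_one_div_atTop_nhds_zero_nat.eventually_lt_const hl] with k hk3 hkl
    obtain ⟨hsm, hrange, hzero, hone, hderivb⟩ := hφ k hk3 hkl
    set K := (k:ℝ) with hKdef
    have hK0 : (0:ℝ) < K := by
      have : (0:ℝ) < (k:ℝ) := by exact_mod_cast (by omega : 0 < k)
      exact this
    have h1K : (0:ℝ) < 1/K := by positivity
    have hIccsub : Set.Icc (0:ℝ) (1/K) ⊆ Set.Icc 0 l := Set.Icc_subset_Icc le_rfl hkl.le
    have hIocsub : Set.Ioc (0:ℝ) (1/K) ⊆ Set.Ioo 0 l :=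
      fun r hr => ⟨hr.1, lt_of_le_of_lt hr.2 hkl⟩
    have hnhds : ∀ r : ℝ, r ∈ Set.Ioo 0 l → Set.Icc (0:ℝ) l ∈ 𝓝 r :=
      fun r hr => Icc_mem_nhds hr.1 hr.2
    have hder : ∀ r ∈ Set.Ioo (0:ℝ) l, HasDerivAt (φ k) (deriv (φ k) r) r := by
      intro r hr
      exact ((hsm.contDiffAt (hnhds r hr)).differentiableAt (by simp)).hasDerivAt
    have hd0 : ∀ r ∈ Set.Ioo (0:ℝ) l, 0 ≤ deriv (φ k) r := by
      intro r hr
      rw [← derivWithin_of_mem_nhds (hnhds r hr)]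
      exact (hderivb r ⟨hr.1.le, hr.2.le⟩).1
    have hd2K : ∀ r ∈ Set.Ioo (0:ℝ) l, deriv (φ k) r ≤ 2*K := by
      intro r hr
      rw [← derivWithin_of_mem_nhds (hnhds r hr)]
      exact (hderivb r ⟨hr.1.le, hr.2.le⟩).2
    have hPhieq : ∀ r ∈ Set.Icc (0:ℝ) l, Phi φ l k r = φ k r := by
      intro r hr
      rw [Phi, min_eq_left hr.2, max_eq_right hr.1]
    have hp2kr : ∀ r ∈ Set.Icc (0:ℝ) l, φ k r ≤ 2*K*r := by
      intro r hr
      have h0 : φ k 0 = 0 := hzero 0 ⟨le_refl 0, by positivity⟩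
      have hb := Convex.norm_image_sub_le_of_norm_derivWithin_le
        (hsm.differentiableOn (by simp))
        (fun x hx => by
          rw [Real.norm_eq_abs, abs_of_nonneg (hderivb x hx).1]
          exact (hderivb x hx).2)
        (convex_Icc 0 l) (Set.left_mem_Icc.mpr hl.le) hr
      rw [h0, sub_zero, sub_zero, Real.norm_eq_abs, Real.norm_eq_abs] at hb
      calc φ k r ≤ |φ k r| := le_abs_self _
        _ ≤ 2*K*|r| := hb
        _ = 2*K*r := by rw [abs_of_nonneg hr.1]
    have hPhicont : Continuous (fun r : ℝ => Phi φ l k r) := by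
      apply hsm.continuousOn.comp_continuous
        (continuous_const.max (continuous_id.min continuous_const))
      intro x
      exact Set.mem_Icc.mpr ⟨le_max_left _ _, max_le hl.le (min_le_right _ _)⟩
    have hdm : Measurable (deriv (φ k)) := measurable_deriv _
    have hm1 : Measurable (fun r : ℝ => Phi φ l k r * r⁻¹) :=
      hPhicont.measurable.mul measurable_inv
    have hGkm : Measurable (Gk φ l k) := by
      apply Measurable.ennreal_ofReal
      exact Real.continuous_sqrt.measurable.comp
        ((measurable_const.add ((hdm.pow_const 2).add (hm1.pow_const 2))).add
          ((hdm.mul hm1).pow_const 2))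
    -- FTC : the half
    have hphi1K : φ k (1/K) = 1 := hone (1/K) ⟨le_rfl, hkl.le⟩
    have hphi0 : φ k 0 = 0 := hzero 0 ⟨le_refl 0, by positivity⟩
    set g' : ℝ → ℝ := fun r => deriv (φ k) r * Phi φ l k r with hg'def
    have hg'm : Measurable g' := hdm.mul hPhicont.measurable
    have hg'eq : ∀ r ∈ Set.Icc (0:ℝ) l, g' r = deriv (φ k) r * φ k r := by
      intro r hr
      rw [hg'def]
      simp only
      rw [hPhieq r hr]
    have hg'nn : ∀ r ∈ Set.Ioo (0:ℝ) l, 0 ≤ g' r := by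
      intro r hr
      rw [hg'eq r ⟨hr.1.le, hr.2.le⟩]
      exact mul_nonneg (hd0 r hr) (hrange r ⟨hr.1.le, hr.2.le⟩).1
    have hg'bdd : ∀ r ∈ Set.Ioc (0:ℝ) (1/K), ‖g' r‖ ≤ 2*K := by
      intro r hr
      have hrIoo := hIocsub hr
      have hrIcc : r ∈ Set.Icc (0:ℝ) l := ⟨hrIoo.1.le, hrIoo.2.le⟩
      rw [Real.norm_eq_abs, abs_of_nonneg (hg'nn r hrIoo), hg'eq r hrIcc]
      calc deriv (φ k) r * φ k r ≤ 2*K*1 :=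
            mul_le_mul (hd2K r hrIoo) (hrange r hrIcc).2 (hrange r hrIcc).1
              (by positivity)
        _ = 2*K := mul_one _
    have hg'int : IntegrableOn g' (Set.Ioc 0 (1/K)) := by
      apply Measure.integrableOn_of_bounded (M := 2*K)
      · rw [Real.volume_Ioc]; exact ENNReal.ofReal_ne_top
      · exact hg'm.aestronglyMeasurable
      · filter_upwards [ae_restrict_mem measurableSet_Ioc] with r hr using hg'bdd r hr
    have hFTC : ∫ r in Set.Ioc (0:ℝ) (1/K), g' r = 1/2 := by
      rw [← intervalIntegral.integral_of_le h1K.le]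
      have heval : ∫ r in (0:ℝ)..(1/K), g' r
          = (fun t => φ k t ^ 2 / 2) (1/K) - (fun t => φ k t ^ 2 / 2) 0 := by
        apply intervalIntegral.integral_eq_sub_of_hasDeriv_right_of_le (f := fun t => φ k t ^ 2 / 2) h1K.le
        · exact ((hsm.continuousOn.mono hIccsub).pow 2).div_const 2
        · intro r hr
          have hrIoo : r ∈ Set.Ioo (0:ℝ) l := ⟨hr.1, hr.2.trans hkl⟩
          have hdd : HasDerivAt (fun t => φ k t ^ 2 / 2) (g' r) r := by
            have h := ((hder r hrIoo).pow 2).div_const 2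
            refine h.congr_deriv ?_
            rw [hg'eq r ⟨hrIoo.1.le, hrIoo.2.le⟩]
            norm_num
            ring
          exact hdd.hasDerivWithinAt
        · rw [intervalIntegrable_iff, Set.uIoc_of_le h1K.le]
          exact hg'int
      rw [heval]
      simp only
      rw [hphi1K, hphi0]
      norm_num
    have hlowint : ∫⁻ r in Set.Ioc (0:ℝ) (1/K), ENNReal.ofReal (2 * Real.pi * g' r)
        = ENNReal.ofReal Real.pi := by
      rw [← ofReal_integral_eq_lintegral_ofReal]
      · rw [MeasureTheory.integral_const_mul, hFTC]
        congr 1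
        ring
      · exact hg'int.const_mul _
      · filter_upwards [ae_restrict_mem measurableSet_Ioc] with r hr
        have := hg'nn r (hIocsub hr)
        positivity
    have hCg : C * ∫⁻ r in Set.Ioc (0:ℝ) (1/K), ENNReal.ofReal (g' r)
        = ENNReal.ofReal Real.pi := by
      rw [hCdef, ← lintegral_const_mul _ hg'm.ennreal_ofReal]
      rw [← hlowint]
      apply lintegral_congr
      intro r
      rw [← ENNReal.ofReal_mul (by positivity)]
    -- pointwise bounds on the inner interval
    have hpt : ∀ r ∈ Set.Ioc (0:ℝ) (1/K),
        ENNReal.ofReal (g' r) ≤ ENNReal.ofReal r * Gk φ l k r ∧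
        ENNReal.ofReal r * Gk φ l k r
          ≤ ENNReal.ofReal (g' r) + ENNReal.ofReal ((4*K+1)*r) := by
      intro r hr
      have hrIoo := hIocsub hr
      have hrIcc : r ∈ Set.Icc (0:ℝ) l := ⟨hrIoo.1.le, hrIoo.2.le⟩
      have heq : ENNReal.ofReal r * Gk φ l k r
          = ENNReal.ofReal (Real.sqrt (1 + (deriv (φ k) r) ^ 2)
              * Real.sqrt (r ^ 2 + (φ k r) ^ 2)) := by
        rw [Gk, ← ENNReal.ofReal_mul hrIoo.1.le, hPhieq r hrIcc, point_id r _ _ hrIoo.1]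
      have hb := point_bounds r (deriv (φ k) r) (φ k r) K hrIoo.1 (hd0 r hrIoo)
        (hd2K r hrIoo) (hrange r hrIcc).1 (hp2kr r hrIcc)
      constructor
      · rw [heq]
        apply ENNReal.ofReal_le_ofReal
        rw [hg'eq r hrIcc]
        exact hb.1
      · rw [heq]
        calc ENNReal.ofReal (Real.sqrt (1 + (deriv (φ k) r) ^ 2)
              * Real.sqrt (r ^ 2 + (φ k r) ^ 2))
            ≤ ENNReal.ofReal (deriv (φ k) r * φ k r + (4*K+1)*r) :=
              ENNReal.ofReal_le_ofReal hb.2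
          _ ≤ ENNReal.ofReal (deriv (φ k) r * φ k r) + ENNReal.ofReal ((4*K+1)*r) :=
              ENNReal.ofReal_add_le
          _ = ENNReal.ofReal (g' r) + ENNReal.ofReal ((4*K+1)*r) := by
              rw [hg'eq r hrIcc]
    -- lower bound for A k
    have hAlow : ENNReal.ofReal Real.pi ≤ A k := by
      rw [hAdef]
      simp only
      calc ENNReal.ofReal Real.pi
          = C * ∫⁻ r in Set.Ioc (0:ℝ) (1/K), ENNReal.ofReal (g' r) := hCg.symm
        _ ≤ C * ∫⁻ r in Set.Ioc 0 (1/K), ENNReal.ofReal r * Gk φ l k r := by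
            apply mul_le_mul_right
            apply lintegral_mono_ae
            filter_upwards [ae_restrict_mem measurableSet_Ioc] with r hr using (hpt r hr).1
    -- upper bound for A k
    have hAup : A k ≤ U k := by
      rw [hAdef, hUdef]
      simp only
      have hup1 : ∫⁻ r in Set.Ioc (0:ℝ) (1/K), ENNReal.ofReal r * Gk φ l k r
          ≤ (∫⁻ r in Set.Ioc (0:ℝ) (1/K), ENNReal.ofReal (g' r))
            + ∫⁻ r in Set.Ioc (0:ℝ) (1/K), ENNReal.ofReal ((4*K+1)*r) := by
        rw [← lintegral_add_left hg'm.ennreal_ofReal]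
        apply lintegral_mono_ae
        filter_upwards [ae_restrict_mem measurableSet_Ioc] with r hr using (hpt r hr).2
      have hE : ∫⁻ r in Set.Ioc (0:ℝ) (1/K), ENNReal.ofReal ((4*K+1)*r)
          ≤ ENNReal.ofReal ((4*K+1)*(1/K)) * ENNReal.ofReal (1/K) := by
        calc ∫⁻ r in Set.Ioc (0:ℝ) (1/K), ENNReal.ofReal ((4*K+1)*r)
            ≤ ∫⁻ _ in Set.Ioc (0:ℝ) (1/K), ENNReal.ofReal ((4*K+1)*(1/K)) := by
              apply lintegral_mono_ae
              filter_upwards [ae_restrict_mem measurableSet_Ioc] with r hr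
              apply ENNReal.ofReal_le_ofReal
              apply mul_le_mul_of_nonneg_left hr.2 (by positivity)
          _ = ENNReal.ofReal ((4*K+1)*(1/K)) * volume (Set.Ioc (0:ℝ) (1/K)) :=
              setLIntegral_const _ _
          _ = ENNReal.ofReal ((4*K+1)*(1/K)) * ENNReal.ofReal (1/K) := by
              rw [Real.volume_Ioc, sub_zero]
      calc C * ∫⁻ r in Set.Ioc (0:ℝ) (1/K), ENNReal.ofReal r * Gk φ l k r
          ≤ C * ((∫⁻ r in Set.Ioc (0:ℝ) (1/K), ENNReal.ofReal (g' r))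
              + ∫⁻ r in Set.Ioc (0:ℝ) (1/K), ENNReal.ofReal ((4*K+1)*r)) :=
            mul_le_mul_right hup1 C
        _ = C * (∫⁻ r in Set.Ioc (0:ℝ) (1/K), ENNReal.ofReal (g' r))
              + C * ∫⁻ r in Set.Ioc (0:ℝ) (1/K), ENNReal.ofReal ((4*K+1)*r) :=
            mul_add _ _ _
        _ ≤ ENNReal.ofReal Real.pi
              + ENNReal.ofReal (2 * Real.pi * ((4*K+1) * (1/K)) * (1/K)) := by
            apply add_le_add (le_of_eq hCg)
            calc C * ∫⁻ r in Set.Ioc (0:ℝ) (1/K), ENNReal.ofReal ((4*K+1)*r)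
                ≤ C * (ENNReal.ofReal ((4*K+1)*(1/K)) * ENNReal.ofReal (1/K)) :=
                  mul_le_mul_right hE C
              _ = ENNReal.ofReal (2 * Real.pi * ((4*K+1) * (1/K)) * (1/K)) := by
                  rw [hCdef, ← ENNReal.ofReal_mul (by positivity),
                    ← ENNReal.ofReal_mul (by positivity)]
                  ring_nf
    -- splitting of the vortex area
    have hdisj : Disjoint (Set.Ioc (0:ℝ) (1/K)) (Set.Ioo (1/K) l) := by
      apply Set.disjoint_left.mpr
      intro r h1 h2
      exact absurd h2.1 (not_lt.mpr h1.2)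
    have hsplit : S k + B k = vortexGradArea l := by
      rw [hvort, hSdef, hBdef]
      simp only
      rw [← mul_add]
      congr 1
      rw [← lintegral_union measurableSet_Ioo hdisj, Set.Ioc_union_Ioo_eq_Ioo h1K.le hkl]
    have hSb : S k ≤ C * (ENNReal.ofReal (Real.sqrt (l ^ 2 + 1)) * ENNReal.ofReal (1/K)) := by
      rw [hSdef]
      simp only
      apply mul_le_mul_right
      calc ∫⁻ r in Set.Ioc (0:ℝ) (1/K), ENNReal.ofReal r * Gvort r
          ≤ ENNReal.ofReal (Real.sqrt (l ^ 2 + 1)) * volume (Set.Ioc (0:ℝ) (1/K)) :=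
            hbound _ measurableSet_Ioc hIocsub
        _ = ENNReal.ofReal (Real.sqrt (l ^ 2 + 1)) * ENNReal.ofReal (1/K) := by
            rw [Real.volume_Ioc, sub_zero]
    -- the graph area identity
    have hgraph : graphArea (fun x => φ k ‖x‖ • vortex x) (ball (0:V2) l) = A k + B k := by
      have hueq : (fun x : V2 => φ k ‖x‖ • vortex x)
          = (fun y : V2 => (φ k ‖y‖ * ‖y‖⁻¹) • y) := by
        funext y; simp [vortex, smul_smul]
      rw [hueq]
      unfold graphArea
      rw [ball_to_radial l _ (Gk φ l k) hGkm ?_]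
      · rw [← Set.Ioc_union_Ioo_eq_Ioo h1K.le hkl,
          lintegral_union measurableSet_Ioo hdisj, mul_add]
        congr 1
        rw [hBdef]
        simp only
        congr 1
        apply setLIntegral_congr_fun measurableSet_Ioo
        intro r hr
        have hd0' : deriv (φ k) r = 0 := by
          have hnh : Set.Icc (1/K) l ∈ 𝓝 r := Icc_mem_nhds hr.1 hr.2
          have heq1 : φ k =ᶠ[𝓝 r] fun _ => 1 :=
            eventually_of_mem hnh (fun y hy => hone y hy)
          rw [heq1.deriv_eq, deriv_const]
        have hPhi1 : Phi φ l k r = 1 := by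
          rw [hPhieq r ⟨(h1K.trans hr.1).le, hr.2.le⟩]
          exact hone r ⟨hr.1.le, hr.2.le⟩
        beta_reduce
        rw [Gk, Gvort, hd0', hPhi1]
        norm_num
      · intro x hx
        have hx0 : x ≠ 0 := norm_pos_iff.1 hx.1
        have hkf := keyFDeriv (φ k) (deriv (φ k) ‖x‖) x hx0 (hder ‖x‖ hx)
        unfold areaIntegrand
        rw [hkf.1, hkf.2, Gk, hPhieq ‖x‖ ⟨hx.1.le, hx.2.le⟩]
    exact ⟨hgraph, hAlow, hAup, hsplit, hSb⟩
  -- limits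
  have hS0 : Tendsto S atTop (𝓝 0) := by
    have h1 : Tendsto (fun k : ℕ => ENNReal.ofReal (1/(k:ℝ))) atTop (𝓝 0) := by
      have := ENNReal.tendsto_ofReal tendsto_one_div_atTop_nhds_zero_nat
      simpa using this
    have hub : Tendsto (fun k : ℕ =>
        C * (ENNReal.ofReal (Real.sqrt (l ^ 2 + 1)) * ENNReal.ofReal (1/(k:ℝ))))
        atTop (𝓝 0) := by
      have h2 := ENNReal.Tendsto.const_mul (a := C * ENNReal.ofReal (Real.sqrt (l ^ 2 + 1)))
        h1 (Or.inr (ENNReal.mul_ne_top hCne ENNReal.ofReal_ne_top))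
      rw [mul_zero] at h2
      apply h2.congr
      intro k
      rw [mul_assoc]
    apply tendsto_of_tendsto_of_tendsto_of_le_of_le' tendsto_const_nhds hub
    · exact Eventually.of_forall (fun k => by simp)
    · exact hev.mono (fun k h => h.2.2.2.2)
  have hBlim : Tendsto B atTop (𝓝 (vortexGradArea l)) := by
    have hBev : B =ᶠ[atTop] fun k => vortexGradArea l - S k := by
      filter_upwards [hev] with k h
      have hsp := h.2.2.2.1
      have hSkne : S k ≠ ⊤ := by
        apply ne_top_of_le_ne_top hT
        calc S k ≤ S k + B k := le_self_add
          _ = _ := hsp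
      rw [← hsp, ENNReal.add_sub_cancel_left hSkne]
    have hts := ENNReal.Tendsto.sub
      (tendsto_const_nhds : Tendsto (fun _ : ℕ => vortexGradArea l) atTop _) hS0 (Or.inl hT)
    rw [tsub_zero] at hts
    exact Tendsto.congr' hBev.symm hts
  have hUlim : Tendsto U atTop (𝓝 (ENNReal.ofReal Real.pi)) := by
    have hreal : Tendsto (fun k : ℕ =>
        2 * Real.pi * ((4*(k:ℝ)+1) * (1/(k:ℝ))) * (1/(k:ℝ))) atTop (𝓝 0) := by
      apply tendsto_of_tendsto_of_tendsto_of_le_of_le' tendsto_const_nhds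
        (tendsto_const_div_atTop_nhds_zero_nat (10 * Real.pi))
      · filter_upwards [eventually_ge_atTop 1] with k hk
        have hK0 : (0:ℝ) < (k:ℝ) := by exact_mod_cast hk
        positivity
      · filter_upwards [eventually_ge_atTop 1] with k hk
        have hK1 : (1:ℝ) ≤ (k:ℝ) := by exact_mod_cast hk
        have hK0 : (0:ℝ) < (k:ℝ) := by linarith
        have he : (4*(k:ℝ)+1) * (1/(k:ℝ)) = 4 + 1/(k:ℝ) := by field_simp
        rw [he, div_eq_mul_inv (10 * Real.pi), ← one_div]
        have h1 : 1/(k:ℝ) ≤ 1 := by rw [div_le_one hK0]; exact hK1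
        have h2 : (0:ℝ) ≤ 1/(k:ℝ) := by positivity
        have h3 : 2*Real.pi*(4+1/(k:ℝ)) ≤ 10*Real.pi := by nlinarith [Real.pi_pos]
        exact mul_le_mul_of_nonneg_right h3 h2
    have h2 : Tendsto (fun k : ℕ => ENNReal.ofReal
        (2 * Real.pi * ((4*(k:ℝ)+1) * (1/(k:ℝ))) * (1/(k:ℝ)))) atTop (𝓝 0) := by
      have := ENNReal.tendsto_ofReal hreal
      simpa using this
    have h3 := Tendsto.add
      (tendsto_const_nhds : Tendsto (fun _ : ℕ => ENNReal.ofReal Real.pi) atTop _) h2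
    rw [add_zero] at h3
    rw [hUdef]
    exact h3
  have hAlim : Tendsto A atTop (𝓝 (ENNReal.ofReal Real.pi)) :=
    tendsto_of_tendsto_of_tendsto_of_le_of_le' tendsto_const_nhds hUlim
      (hev.mono fun k h => h.2.1) (hev.mono fun k h => h.2.2.1)
  have hsum : Tendsto (fun k => A k + B k) atTop
      (𝓝 (ENNReal.ofReal Real.pi + vortexGradArea l)) := hAlim.add hBlim
  have hfinal := Tendsto.congr' (EventuallyEq.symm (hev.mono fun k h => h.1)) hsum
  rwa [add_comm (ENNReal.ofReal Real.pi) (vortexGradArea l)] at hfinal
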